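/- arXiv:math/9507225 — 3 statements merged into one kernel-verified Lean document; each statement's English description precedes it below -/
import Mathlib

section
/- Let λ be a real number with λ < −1. Then there exists a real t > 0 such that (i·t, −i·t) is an attracting periodic cycle of period 2 for f_λ: f_λ(i·t) = −i·t, f_λ(−i·t) = i·t, and |deriv (f_λ^[2])(i·t)| < 1. -/
/-! Put `μ = -λ > 1`. On the imaginary axis `f_λ (i s) = -i μ tanh s`, so a positive solution
of `μ tanh t = t` gives `f_λ (i t) = -i t`, and `f_λ (-i t) = i t` because `f_λ` is odd. Such a
`t` exists by the intermediate value theorem: `μ tanh t > μ t / cosh t > t` for small `t > 0`,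
while `μ tanh t < μ`. Since `f_λ' = λ / cos²` and `cos (i s) = cosh s`, the multiplier of the
cycle is `λ² / cosh⁴ t`, and `μ = t cosh t / sinh t < cosh² t` because `2 t < sinh (2 t)`. -/

open Complex Filter

/-- The tangent family: `f_λ(z) = λ · tan z`, with Mathlib's total complex tangent. -/
noncomputable def ftan (lam : ℂ) : ℂ → ℂ := fun z => lam * Complex.tan z

namespace Real

theorem continuous_tanh : Continuous tanh := by
  simp_rw [funext tanh_eq_sinh_div_cosh]
  exact continuous_sinh.div continuous_cosh fun x => (cosh_pos x).ne'

theorem exists_pos_mul_tanh_eq_self {μ : ℝ} (hμ : 1 < μ) : ∃ t, 0 < t ∧ μ * tanh t = t := by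
  set t₀ := arcosh μ / 2
  have ht₀ : 0 < t₀ := half_pos (arcosh_pos hμ)
  have hcosh : cosh t₀ < μ := by
    conv_rhs => rw [← cosh_arcosh hμ.le]
    rw [cosh_lt_cosh, abs_of_pos ht₀, abs_of_pos (arcosh_pos hμ)]
    exact half_lt_self (arcosh_pos hμ)
  have hpos : t₀ < μ * tanh t₀ := by
    rw [tanh_eq_sinh_div_cosh, mul_div_assoc', lt_div_iff₀ (cosh_pos t₀)]
    nlinarith [self_lt_sinh_iff.2 ht₀]
  set T := max t₀ μ
  have hneg : μ * tanh T < T :=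
    calc μ * tanh T < μ := mul_lt_of_lt_one_right (by linarith) (tanh_lt_one T)
      _ ≤ T := le_max_right _ _
  obtain ⟨t, ht, hfix⟩ := intermediate_value_Icc' (le_max_left t₀ μ)
    (continuous_tanh.const_mul μ |>.sub continuous_id).continuousOn
    (show (0 : ℝ) ∈ Set.Icc (μ * tanh T - T) (μ * tanh t₀ - t₀) by constructor <;> linarith)
  exact ⟨t, ht₀.trans_le ht.1, sub_eq_zero.1 hfix⟩

theorem lt_cosh_sq_of_mul_tanh_eq_self {μ t : ℝ} (ht : 0 < t) (hfix : μ * tanh t = t) :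
    μ < cosh t ^ 2 := by
  have hsinh : 0 < sinh t := sinh_pos_iff.2 ht
  have hdouble : t < sinh t * cosh t := by
    have := self_lt_sinh_iff.2 (by linarith : 0 < 2 * t)
    rw [sinh_two_mul] at this
    linarith
  rw [tanh_eq_sinh_div_cosh, mul_div_assoc', div_eq_iff (cosh_pos t).ne'] at hfix
  nlinarith [cosh_pos t]

end Real

theorem ftan_neg (lam z : ℂ) : ftan lam (-z) = -ftan lam z := by
  simp only [ftan, Complex.tan_neg, mul_neg]

theorem ftan_I_mul (lam : ℂ) (s : ℝ) : ftan lam (I * s) = lam * Real.tanh s * I := by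
  rw [ftan, mul_comm I, Complex.tan_mul_I, Complex.ofReal_tanh, mul_assoc]

theorem hasDerivAt_ftan_I_mul (lam : ℂ) (s : ℝ) :
    HasDerivAt (ftan lam) (lam / Real.cosh s ^ 2) (I * s) := by
  have hcos : Complex.cos (I * s) = Real.cosh s := by
    rw [mul_comm I, Complex.cos_mul_I, Complex.ofReal_cosh]
  have := (Complex.hasDerivAt_tan (hcos ▸ ofReal_ne_zero.2 (Real.cosh_pos s).ne')).const_mul lam
  rwa [hcos, mul_one_div] at this

theorem deriv_ftan_iterate_two_of_two_cycle {lam : ℂ} {t : ℝ}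
    (hcycle : ftan lam (I * t) = -(I * t)) :
    deriv (ftan lam)^[2] (I * t) = lam ^ 2 / Real.cosh t ^ 4 := by
  have hback : HasDerivAt (ftan lam) (lam / Real.cosh t ^ 2) (ftan lam (I * t)) := by
    simpa [hcycle] using hasDerivAt_ftan_I_mul lam (-t)
  rw [Function.iterate_succ, Function.iterate_one,
    (hback.comp _ (hasDerivAt_ftan_I_mul lam t)).deriv]
  ring

/-- For real `λ < −1` there is `t > 0` such that `(it, −it)` is an attracting
periodic cycle of period `2` for `f_λ`. -/
theorem attracting_two_cycle_real_lam (lam : ℝ) (h : lam < -1) :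
    ∃ t : ℝ, 0 < t ∧
      ftan (lam : ℂ) (Complex.I * t) = -(Complex.I * t) ∧
      ftan (lam : ℂ) (-(Complex.I * t)) = Complex.I * t ∧
      ‖deriv ((ftan (lam : ℂ))^[2]) (Complex.I * t)‖ < 1 := by
  obtain ⟨t, ht, hfix⟩ := Real.exists_pos_mul_tanh_eq_self (show 1 < -lam by linarith)
  have hcycle : ftan lam (I * t) = -(I * t) := by
    rw [ftan_I_mul, ← ofReal_mul, show lam * Real.tanh t = -t by linarith]
    push_cast; ring
  refine ⟨t, ht, hcycle, by rw [ftan_neg, hcycle, neg_neg], ?_⟩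
  have hμ := Real.lt_cosh_sq_of_mul_tanh_eq_self ht hfix
  rw [deriv_ftan_iterate_two_of_two_cycle hcycle, norm_div, norm_pow, norm_pow, norm_real,
    norm_real, Real.norm_of_nonpos (by linarith : lam ≤ 0),
    Real.norm_of_nonneg (Real.cosh_pos t).le, div_lt_one (by positivity)]
  calc (-lam) ^ 2 < (Real.cosh t ^ 2) ^ 2 := pow_lt_pow_left₀ hμ (by linarith) two_ne_zero
    _ = Real.cosh t ^ 4 := by ring
end

section
/- Fix an integer p ≥ 1. If (λ_n) is a sequence in 𝒞_p with λ_n ≠ λ for all n and λ_n → λ for some λ ∈ ℂ with λ ≠ 0, then λ ∈ 𝒞_k for some 1 ≤ k ≤ p−1. (The finite accumulation points of the virtual centers of order p are virtual centers of strictly lower order.) -/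
open Complex Filter

/-- `z` is a prepole of `f_λ` of order `p` (for `p ≥ 1`): `cos (f_λ^[p−1] z) = 0`
and `cos (f_λ^[j] z) ≠ 0` for all `0 ≤ j < p−1`. -/
def IsPrepole (lam : ℂ) (p : ℕ) (z : ℂ) : Prop :=
  Complex.cos ((ftan lam)^[p - 1] z) = 0 ∧
  ∀ j < p - 1, Complex.cos ((ftan lam)^[j] z) ≠ 0

/-- The orbit of `z` under `f_λ` is pole-free up to time `q`. -/
def PoleFree (lam : ℂ) (q : ℕ) (z : ℂ) : Prop :=
  ∀ j < q, Complex.cos ((ftan lam)^[j] z) ≠ 0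

/-!
For each `j`, the parameters `λ` whose asymptotic value `iλ` meets no pole before time `j` form
a set `U_j ⊆ ℂ` with countable complement, hence connected, and `λ ↦ f_λ^[j](iλ)` is analytic
on it. Since `λ = 0` lies in `U_j` with `cos (f_0^[j] 0) = 1`, the identity principle makes the
zeros of `λ ↦ cos (f_λ^[j](iλ))` discrete in `U_j`, which keeps the complement of
`U_{j+1}` countable. Virtual centers of order `p` are such zeros for `j = p - 1`, so they
cannot accumulate at a point of `U_{p-1}`, and a limit outside `U_{p-1}` hits a pole
earlier, i.e. is a virtual center of lower order.
-/

theorem countable_sdiff_of_mem_codiscreteWithin {X : Type*} [TopologicalSpace X]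
    [HereditarilyLindelofSpace X] {s U : Set X} (hs : s ∈ codiscreteWithin U) :
    (U \ s).Countable := by
  have hdisc : IsDiscrete (sᶜ ∩ U) := isDiscrete_of_codiscreteWithin (by rwa [compl_compl])
  rw [Set.sdiff_eq_compl_inter]
  exact (HereditarilyLindelofSpace.isLindelof _).countable_of_isDiscrete hdisc

theorem isPreconnected_of_countable_compl {U : Set ℂ} (hU : Uᶜ.Countable) : IsPreconnected U := by
  simpa using (hU.isConnected_compl_of_one_lt_rank (by simp)).isPreconnected

theorem AnalyticOnNhd.eventually_ne_zero_of_countable_compl {E : Type*} [NormedAddCommGroup E]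
    [NormedSpace ℂ E] {f : ℂ → E} {U : Set ℂ} (hf : AnalyticOnNhd ℂ f U) (hU : Uᶜ.Countable)
    {z₀ : ℂ} (hz₀ : z₀ ∈ U) (hfz₀ : f z₀ ≠ 0) : ∀ᶠ z in codiscreteWithin U, f z ≠ 0 :=
  (hf.eqOn_zero_or_eventually_ne_zero_of_preconnected
    (isPreconnected_of_countable_compl hU)).resolve_left fun h => hfz₀ (h hz₀)

theorem Complex.analyticAt_tan {z : ℂ} (hz : cos z ≠ 0) : AnalyticAt ℂ tan z := by
  have : AnalyticAt ℂ (fun w => sin w / cos w) z :=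
    (analyticAt_sin (x := z)).div analyticAt_cos hz
  simpa [funext tan_eq_sin_div_cos] using this

theorem exists_isPrepole_of_not_poleFree {lam z : ℂ} {q : ℕ} (h : ¬ PoleFree lam q z) :
    ∃ k, 1 ≤ k ∧ k ≤ q ∧ IsPrepole lam k z := by
  classical
  have hex : ∃ j, j < q ∧ cos ((ftan lam)^[j] z) = 0 := by
    simpa [PoleFree] using h
  obtain ⟨hlt, hpole⟩ := Nat.find_spec hex
  refine ⟨Nat.find hex + 1, le_add_self, hlt, by simpa using hpole, fun j hj hzero => ?_⟩
  exact Nat.find_min hex (by omega) ⟨by omega, hzero⟩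

/-- The `j`-th iterate of the asymptotic value `iλ` of `f_λ`, as a function of `λ`. -/
noncomputable def asympOrbit (j : ℕ) (lam : ℂ) : ℂ := (ftan lam)^[j] (I * lam)

theorem asympOrbit_succ (j : ℕ) (lam : ℂ) :
    asympOrbit (j + 1) lam = lam * tan (asympOrbit j lam) := by
  simp only [asympOrbit, Function.iterate_succ_apply', ftan]

theorem asympOrbit_param_zero (j : ℕ) : asympOrbit j 0 = 0 := by
  induction j with
  | zero => simp [asympOrbit]
  | succ j _ => rw [asympOrbit_succ, zero_mul]

def poleFreeParams (j : ℕ) : Set ℂ := {lam | PoleFree lam j (I * lam)}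

theorem zero_mem_poleFreeParams (j : ℕ) : (0 : ℂ) ∈ poleFreeParams j := fun i _ => by
  change cos (asympOrbit i 0) ≠ 0
  simp [asympOrbit_param_zero]

theorem poleFreeParams_succ (j : ℕ) :
    poleFreeParams (j + 1) = poleFreeParams j ∩ {lam | cos (asympOrbit j lam) ≠ 0} := by
  ext lam
  simp only [poleFreeParams, PoleFree, Set.mem_inter_iff, Set.mem_ofPred_eq, asympOrbit,
    Nat.lt_succ_iff_lt_or_eq, or_imp, forall_and, forall_eq]

theorem eventually_cos_asympOrbit_ne_zero_of_analyticOnNhd {j : ℕ}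
    (hA : AnalyticOnNhd ℂ (asympOrbit j) (poleFreeParams j)) (hC : (poleFreeParams j)ᶜ.Countable) :
    ∀ᶠ lam in codiscreteWithin (poleFreeParams j), cos (asympOrbit j lam) ≠ 0 := by
  refine AnalyticOnNhd.eventually_ne_zero_of_countable_compl (fun x hx => ?_) hC
    (zero_mem_poleFreeParams j) (by simp [asympOrbit_param_zero])
  exact analyticAt_cos.comp (hA x hx)

theorem analyticOnNhd_asympOrbit_and_countable_compl (j : ℕ) :
    AnalyticOnNhd ℂ (asympOrbit j) (poleFreeParams j) ∧ (poleFreeParams j)ᶜ.Countable := by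
  induction j with
  | zero =>
    refine ⟨fun x _ => analyticAt_const.mul analyticAt_id, ?_⟩
    simp [poleFreeParams, PoleFree]
  | succ j ih =>
    obtain ⟨hA, hC⟩ := ih
    rw [poleFreeParams_succ]
    refine ⟨fun x ⟨hx, hcos⟩ => ?_, ?_⟩
    · rw [show asympOrbit (j + 1) = fun lam => lam * tan (asympOrbit j lam) from
        funext (asympOrbit_succ j)]
      exact analyticAt_id.mul ((analyticAt_tan hcos).comp (hA x hx))
    · have hzeros := countable_sdiff_of_mem_codiscreteWithin
        (eventually_cos_asympOrbit_ne_zero_of_analyticOnNhd hA hC)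
      exact (hC.union hzeros).mono fun x => by
        simp only [Set.mem_compl_iff, Set.mem_inter_iff, Set.mem_union, Set.mem_sdiff]
        tauto

theorem eventually_cos_asympOrbit_ne_zero (j : ℕ) :
    ∀ᶠ lam in codiscreteWithin (poleFreeParams j), cos (asympOrbit j lam) ≠ 0 :=
  (analyticOnNhd_asympOrbit_and_countable_compl j).elim
    eventually_cos_asympOrbit_ne_zero_of_analyticOnNhd

theorem virtual_center_accumulation_general (p : ℕ)
    (lams : ℕ → ℂ) (lam : ℂ)
    (hmem : ∀ n, lams n ≠ 0 ∧ IsPrepole (lams n) p (Complex.I * lams n))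
    (hne : ∀ n, lams n ≠ lam)
    (hlim : Filter.Tendsto lams Filter.atTop (nhds lam)) :
    ∃ k, 1 ≤ k ∧ k ≤ p - 1 ∧ IsPrepole lam k (Complex.I * lam) := by
  by_contra hlower
  have hfree : lam ∈ poleFreeParams (p - 1) := by
    by_contra h
    exact hlower (exists_isPrepole_of_not_poleFree h)
  have htend : Tendsto lams atTop (nhdsWithin lam {lam}ᶜ) :=
    tendsto_nhdsWithin_of_tendsto_nhds_of_eventually_within _ hlim (.of_forall hne)
  obtain ⟨n, hn⟩ := (htend.eventually (mem_codiscreteWithin_iff_forall_mem_nhdsNE.mp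
    (eventually_cos_asympOrbit_ne_zero (p - 1)) lam hfree)).exists
  rcases hn with hcos | hpole
  · exact hcos (hmem n).2.1
  · exact hpole (hmem n).2.2

/-- Finite accumulation points of the virtual centers of order `p` are virtual
centers of strictly lower order. -/
theorem virtual_center_accumulation (p : ℕ) (hp : 1 ≤ p)
    (lams : ℕ → ℂ) (lam : ℂ) (hlam : lam ≠ 0)
    (hmem : ∀ n, lams n ≠ 0 ∧ IsPrepole (lams n) p (Complex.I * lams n))
    (hne : ∀ n, lams n ≠ lam)
    (hlim : Filter.Tendsto lams Filter.atTop (nhds lam)) :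
    ∃ k, 1 ≤ k ∧ k ≤ p - 1 ∧ IsPrepole lam k (Complex.I * lam) :=
  virtual_center_accumulation_general p lams lam hmem hne hlim
end

section
/- The set S = {λ ∈ ℂ : |λ| > 1 and there exists z ∈ ℂ with cos z ≠ 0, λ·tan z = z and |deriv f_λ(z)| < 1} (the set of parameters of modulus greater than 1 for which f_λ has an attracting fixed point) is a connected subset of ℂ, and it contains every real λ with λ > 1. -/
/-!
A fixed point `z` of `f_λ` with `|λ| > 1` has `sin z ≠ 0`, so `λ = z cos z / sin z` and the
multiplier is `2z / sin 2z`. Since `z` and `-z` give the same `λ`, the parameter set is the image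
of `U = {z : Im z > 0, |2z| < |sin 2z|}` under `z ↦ z cos z / sin z`, once we know that
`|sin 2z| > |2z|` forces `|λ| > 1`, i.e. `|sin z| < |z| |cos z|`. For `|Re z| ≤ π` this follows from
`sin z = z ∫₀¹ cos (t z) dt` and `|cos (t z)|² ≤ 1 + t² (|cos z|² - 1)`, a consequence of the
concavity of `sin` on `[0, π]` and the convexity of `sinh` on `[0, ∞)`; for large `|z|` a crude
bound suffices. `U` is path-connected: moving horizontally towards the imaginary axis keeps the
condition, and the positive imaginary axis lies in `U`. On it the parameter is `y cosh y / sinh y`,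
which takes every real value `> 1`.
-/

open Complex Filter

open Set

namespace Real

theorem convexOn_sinh_Ici : ConvexOn ℝ (Ici 0) sinh := by
  refine convexOn_of_deriv2_nonneg' (convex_Ici 0) (by fun_prop) ?_ fun x hx => ?_
  · simpa only [deriv_sinh] using differentiable_cosh.differentiableOn
  · simpa [deriv_sinh] using hx

theorem abs_sinh_mul_le {t : ℝ} (ht : t ∈ Icc (0 : ℝ) 1) (y : ℝ) :
    |sinh (t * y)| ≤ t * |sinh y| := by
  have h := convexOn_sinh_Ici.2 (mem_Ici.2 (abs_nonneg y)) (self_mem_Ici (a := (0 : ℝ)))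
    ht.1 (sub_nonneg.2 ht.2) (add_sub_cancel t 1)
  simp only [smul_eq_mul, mul_zero, add_zero, sinh_zero] at h
  rwa [abs_sinh, abs_sinh, abs_mul, abs_of_nonneg ht.1]

theorem mul_abs_sin_le {t : ℝ} (ht : t ∈ Icc (0 : ℝ) 1) {x : ℝ} (hx : |x| ≤ π) :
    t * |sin x| ≤ |sin (t * x)| := by
  wlog hx0 : 0 ≤ x generalizing x
  · simpa [mul_neg] using this (x := -x) (by rwa [abs_neg]) (by linarith)
  have hxπ : x ≤ π := (le_abs_self x).trans hx
  have h := strictConcaveOn_sin_Icc.concaveOn.2 ⟨hx0, hxπ⟩ ⟨le_rfl, pi_pos.le⟩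
    ht.1 (sub_nonneg.2 ht.2) (add_sub_cancel t 1)
  simp only [smul_eq_mul, mul_zero, add_zero, sin_zero] at h
  rw [abs_of_nonneg (sin_nonneg_of_nonneg_of_le_pi hx0 hxπ), abs_of_nonneg (h.trans' ?_)]
  · exact h
  · exact mul_nonneg ht.1 (sin_nonneg_of_nonneg_of_le_pi hx0 hxπ)

theorem monotoneOn_sq_sub_sin_sq : MonotoneOn (fun u : ℝ => u ^ 2 - sin u ^ 2) (Ici 0) := by
  refine monotoneOn_of_deriv_nonneg (convex_Ici 0) (by fun_prop) (by fun_prop) fun u hu => ?_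
  rw [interior_Ici] at hu
  have hd : HasDerivAt (fun u : ℝ => u ^ 2 - sin u ^ 2) (2 * u - sin (2 * u)) u := by
    refine ((hasDerivAt_pow 2 u).sub ((hasDerivAt_sin u).pow 2)).congr_deriv ?_
    rw [sin_two_mul]; ring
  rw [hd.deriv, sub_nonneg]
  exact sin_le (by linarith [mem_Ioi.1 hu])

theorem sq_sub_sin_sq_le {u v : ℝ} (h : |u| ≤ |v|) :
    u ^ 2 - sin u ^ 2 ≤ v ^ 2 - sin v ^ 2 := by
  have heven (u : ℝ) : u ^ 2 - sin u ^ 2 = |u| ^ 2 - sin |u| ^ 2 := by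
    rcases abs_cases u with ⟨hu, -⟩ | ⟨hu, -⟩ <;> simp [hu]
  rw [heven u, heven v]
  exact monotoneOn_sq_sub_sin_sq (abs_nonneg u) (abs_nonneg v) h

end Real

namespace Complex

theorem sq_norm_sin (z : ℂ) : ‖sin z‖ ^ 2 = Real.sin z.re ^ 2 + Real.sinh z.im ^ 2 := by
  have h : sin z = ↑(Real.sin z.re * Real.cosh z.im) + ↑(Real.cos z.re * Real.sinh z.im) * I := by
    rw [sin_eq]; push_cast [ofReal_sin, ofReal_cos, ofReal_sinh, ofReal_cosh]; ring
  rw [Complex.sq_norm, h, normSq_add_mul_I]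
  nlinarith [Real.sin_sq_add_cos_sq z.re, Real.cosh_sq z.im]

theorem sq_norm_cos (z : ℂ) : ‖cos z‖ ^ 2 = Real.cos z.re ^ 2 + Real.sinh z.im ^ 2 := by
  have h : cos z =
      ↑(Real.cos z.re * Real.cosh z.im) + ↑(-(Real.sin z.re * Real.sinh z.im)) * I := by
    rw [cos_eq]; push_cast [ofReal_sin, ofReal_cos, ofReal_sinh, ofReal_cosh]; ring
  rw [Complex.sq_norm, h, normSq_add_mul_I]
  nlinarith [Real.sin_sq_add_cos_sq z.re, Real.cosh_sq z.im]

theorem norm_sin_le_norm_of_im_eq_zero {z : ℂ} (hz : z.im = 0) : ‖sin z‖ ≤ ‖z‖ := by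
  refine (sq_le_sq₀ (norm_nonneg _) (norm_nonneg _)).1 ?_
  rw [sq_norm_sin, Complex.sq_norm, normSq_apply, hz, Real.sinh_zero]
  nlinarith [Real.sin_sq_le_sq (x := z.re)]

theorem norm_cos_ofReal_mul_le {t : ℝ} (ht : t ∈ Icc (0 : ℝ) 1) {z : ℂ}
    (hz : |z.re| ≤ Real.pi) : ‖cos (t * z)‖ ≤ max 1 ‖cos z‖ := by
  have hre : (↑t * z).re = t * z.re := by simp
  have him : (↑t * z).im = t * z.im := by simp
  have hsin := Real.mul_abs_sin_le ht hz
  have hsinh := Real.abs_sinh_mul_le ht z.im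
  have hsq : ‖cos (t * z)‖ ^ 2 ≤ 1 + t ^ 2 * (‖cos z‖ ^ 2 - 1) := by
    rw [sq_norm_cos, sq_norm_cos, hre, him, Real.cos_sq', Real.cos_sq']
    rw [← sq_abs (Real.sin (t * z.re)), ← sq_abs (Real.sinh (t * z.im)),
      ← sq_abs (Real.sin z.re), ← sq_abs (Real.sinh z.im)]
    nlinarith [abs_nonneg (Real.sinh (t * z.im)), abs_nonneg (Real.sin z.re),
      mul_nonneg ht.1 (abs_nonneg (Real.sin z.re)), ht.1, ht.2]
  have ht2 : t ^ 2 ≤ 1 := pow_le_one₀ ht.1 ht.2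
  refine (sq_le_sq₀ (norm_nonneg _) (by positivity)).1 ?_
  rcases le_total ‖cos z‖ 1 with h | h
  · have : ‖cos z‖ ^ 2 ≤ 1 := pow_le_one₀ (norm_nonneg _) h
    rw [max_eq_left h]; nlinarith [sq_nonneg t]
  · have : 1 ≤ ‖cos z‖ ^ 2 := one_le_pow₀ h
    rw [max_eq_right h]; nlinarith

theorem sin_eq_integral_cos (z : ℂ) : sin z = ∫ t in (0 : ℝ)..1, cos (t * z) * z := by
  rw [intervalIntegral.integral_eq_sub_of_hasDerivAt (f := fun t : ℝ => sin (t * z))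
    (fun t _ => ((hasDerivAt_sin _).comp _ (hasDerivAt_mul_const z)).comp_ofReal)
    ((by fun_prop : Continuous fun t : ℝ => cos (t * z) * z).intervalIntegrable 0 1)]
  simp

theorem norm_sin_lt_norm_mul_norm_cos_of_abs_re_le_pi {z : ℂ} (hz : |z.re| ≤ Real.pi)
    (h : ‖z‖ < ‖sin z‖) : ‖sin z‖ < ‖z‖ * ‖cos z‖ := by
  have hbound (t : ℝ) (ht : t ∈ Icc (0 : ℝ) 1) : ‖cos (t * z) * z‖ ≤ max 1 ‖cos z‖ * ‖z‖ := by
    rw [norm_mul]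
    exact mul_le_mul_of_nonneg_right (norm_cos_ofReal_mul_le ht hz) (norm_nonneg z)
  have hcos : 1 < ‖cos z‖ := by
    by_contra! hle
    have : ‖sin z‖ ≤ max 1 ‖cos z‖ * ‖z‖ * |1 - 0| := by
      rw [sin_eq_integral_cos]
      exact intervalIntegral.norm_integral_le_of_norm_le_const
        fun t ht => hbound t (Ioc_subset_Icc_self (by rwa [uIoc_of_le zero_le_one] at ht))
    rw [max_eq_left hle] at this
    norm_num at this
    linarith
  have hz0 : 0 < ‖z‖ := by
    refine norm_pos_iff.2 fun hz0 => ?_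
    simp [hz0] at h
  rw [max_eq_right hcos.le] at hbound
  calc ‖sin z‖ ≤ ∫ t in (0 : ℝ)..1, ‖cos (t * z) * z‖ := by
        rw [sin_eq_integral_cos]; exact intervalIntegral.norm_integral_le_integral_norm zero_le_one
    _ < ∫ _ in (0 : ℝ)..1, ‖cos z‖ * ‖z‖ := by
        refine intervalIntegral.integral_lt_integral_of_continuousOn_of_le_of_exists_lt zero_lt_one
          (by fun_prop) continuousOn_const (fun t ht => hbound t (Ioc_subset_Icc_self ht))
          ⟨0, left_mem_Icc.2 zero_le_one, ?_⟩
        simpa using mul_lt_mul_of_pos_right hcos hz0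
    _ = ‖z‖ * ‖cos z‖ := by simp [mul_comm]

theorem norm_sin_lt_norm_mul_norm_cos {z : ℂ} (h : ‖2 * z‖ < ‖sin (2 * z)‖) :
    ‖sin z‖ < ‖z‖ * ‖cos z‖ := by
  have hprod : ‖z‖ < ‖sin z‖ * ‖cos z‖ := by
    rw [sin_two_mul] at h
    simp only [norm_mul, Complex.norm_two] at h
    linarith
  rcases le_or_gt ‖sin z‖ ‖z‖ with hle | hlt
  · nlinarith [norm_nonneg (sin z), norm_nonneg (cos z)]
  rcases le_or_gt 2 (‖z‖ ^ 2) with hbig | hsmall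
  · have hsc : ‖sin z‖ ^ 2 ≤ 1 + ‖cos z‖ ^ 2 := by
      rw [sq_norm_sin, sq_norm_cos]
      nlinarith [Real.sin_sq_add_cos_sq z.re, sq_nonneg (Real.cos z.re)]
    refine (sq_lt_sq₀ (norm_nonneg _) (by positivity)).1 ?_
    nlinarith [norm_nonneg z]
  · refine norm_sin_lt_norm_mul_norm_cos_of_abs_re_le_pi ?_ hlt
    nlinarith [abs_re_le_norm z, Real.pi_gt_three, norm_nonneg z]

theorem re_mem_uIcc_of_mem_segment {a b w : ℂ} (hw : w ∈ segment ℝ a b) :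
    w.re ∈ uIcc a.re b.re := by
  have := mem_image_of_mem reLm.toAffineMap hw
  rwa [image_segment, segment_eq_uIcc] at this

theorem im_mem_uIcc_of_mem_segment {a b w : ℂ} (hw : w ∈ segment ℝ a b) :
    w.im ∈ uIcc a.im b.im := by
  have := mem_image_of_mem imLm.toAffineMap hw
  rwa [image_segment, segment_eq_uIcc] at this

theorem norm_lt_norm_sin_iff (w : ℂ) :
    ‖w‖ < ‖sin w‖ ↔ w.re ^ 2 - Real.sin w.re ^ 2 < Real.sinh w.im ^ 2 - w.im ^ 2 := by
  rw [← sq_lt_sq₀ (norm_nonneg _) (norm_nonneg _), sq_norm_sin, Complex.sq_norm, normSq_apply]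
  constructor <;> intro h <;> linarith

end Complex

theorem deriv_ftan (lam : ℂ) {z : ℂ} (hz : cos z ≠ 0) : deriv (ftan lam) z = lam / cos z ^ 2 := by
  rw [← mul_one_div]
  exact ((hasDerivAt_tan hz).const_mul lam : HasDerivAt (ftan lam) _ z).deriv

noncomputable def fixedPointParam (z : ℂ) : ℂ := z * cos z / sin z

theorem mul_tan_eq_self_iff {lam z : ℂ} (hc : cos z ≠ 0) (hs : sin z ≠ 0) :
    lam * tan z = z ↔ lam = fixedPointParam z := by
  rw [fixedPointParam, tan_eq_sin_div_cos, eq_div_iff hs]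
  constructor <;> intro h <;> field_simp at h ⊢ <;> linear_combination h

theorem fixedPointParam_div_cos_sq {z : ℂ} (hc : cos z ≠ 0) (hs : sin z ≠ 0) :
    fixedPointParam z / cos z ^ 2 = 2 * z / sin (2 * z) := by
  rw [fixedPointParam, sin_two_mul]
  field_simp

theorem fixedPointParam_neg (z : ℂ) : fixedPointParam (-z) = fixedPointParam z := by
  rw [fixedPointParam, fixedPointParam, sin_neg, cos_neg, neg_mul, neg_div_neg_eq]

theorem fixedPointParam_ofReal_mul_I (y : ℝ) :
    fixedPointParam (y * I) = ((y * Real.cosh y / Real.sinh y : ℝ) : ℂ) := by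
  rw [fixedPointParam, cos_mul_I, sin_mul_I, ← ofReal_cosh, ← ofReal_sinh]
  push_cast
  rw [mul_right_comm, mul_div_mul_right _ _ I_ne_zero]

def upperAttractingFixedPoints : Set ℂ := {z | 0 < z.im ∧ ‖2 * z‖ < ‖sin (2 * z)‖}

theorem sin_ne_zero_and_cos_ne_zero {z : ℂ} (h : ‖2 * z‖ < ‖sin (2 * z)‖) :
    sin z ≠ 0 ∧ cos z ≠ 0 := by
  have : sin (2 * z) ≠ 0 := norm_pos_iff.1 ((norm_nonneg _).trans_lt h)
  rw [sin_two_mul] at this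
  obtain ⟨h2s, hc⟩ := mul_ne_zero_iff.1 this
  exact ⟨right_ne_zero_of_mul h2s, hc⟩

theorem ofReal_mul_I_mem_upperAttractingFixedPoints {y : ℝ} (hy : 0 < y) :
    (y * I : ℂ) ∈ upperAttractingFixedPoints := by
  refine ⟨by simpa using hy, (norm_lt_norm_sin_iff _).2 ?_⟩
  have := Real.self_lt_sinh_iff.2 (by linarith : 0 < 2 * y)
  simp only [mul_re, mul_im, re_ofNat, im_ofNat, ofReal_re, ofReal_im, I_re, I_im]
  norm_num
  nlinarith

theorem isPathConnected_upperAttractingFixedPoints :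
    IsPathConnected upperAttractingFixedPoints := by
  refine ⟨I, by simpa using ofReal_mul_I_mem_upperAttractingFixedPoints one_pos, fun z hz => ?_⟩
  have horizontal : JoinedIn upperAttractingFixedPoints z (z.im * I) := by
    refine JoinedIn.of_segment_subset fun w hw => ?_
    have hre : |w.re| ≤ |z.re| := by
      have := re_mem_uIcc_of_mem_segment hw
      simp only [mul_re, ofReal_re, ofReal_im, I_re, I_im] at this
      norm_num at this
      rcases mem_uIcc.1 this with h | h <;> rw [abs_le] <;> constructor <;>
        linarith [le_abs_self z.re, neg_abs_le z.re]
    have him : w.im = z.im := by simpa using im_mem_uIcc_of_mem_segment hw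
    refine ⟨him ▸ hz.1, (norm_lt_norm_sin_iff _).2 ?_⟩
    have hz' := (norm_lt_norm_sin_iff _).1 hz.2
    simp only [mul_re, mul_im, re_ofNat, im_ofNat, zero_mul, sub_zero, add_zero, him] at hz' ⊢
    refine lt_of_le_of_lt (Real.sq_sub_sin_sq_le ?_) hz'
    rw [abs_mul, abs_mul]
    exact mul_le_mul_of_nonneg_left hre (abs_nonneg 2)
  have vertical : JoinedIn upperAttractingFixedPoints (z.im * I) I := by
    refine JoinedIn.of_segment_subset fun w hw => ?_
    have hre : w.re = 0 := by simpa using re_mem_uIcc_of_mem_segment hw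
    have him : 0 < w.im := by
      have := im_mem_uIcc_of_mem_segment hw
      simp only [mul_im, ofReal_re, ofReal_im, I_re, I_im, mul_zero, mul_one] at this
      rcases mem_uIcc.1 this with h | h <;> linarith [hz.1]
    have hw : w = (w.im : ℂ) * I := by apply Complex.ext <;> simp [hre]
    exact hw ▸ ofReal_mul_I_mem_upperAttractingFixedPoints him
  exact (horizontal.trans vertical).symm

theorem setOf_attracting_eq_image_fixedPointParam :
    {lam : ℂ | 1 < ‖lam‖ ∧ ∃ z : ℂ, cos z ≠ 0 ∧ lam * tan z = z ∧ ‖deriv (ftan lam) z‖ < 1}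
      = fixedPointParam '' upperAttractingFixedPoints := by
  ext lam
  constructor
  · rintro ⟨hlam, z, hc, hfix, hmul⟩
    have hs : sin z ≠ 0 := by
      intro hs
      rw [tan_eq_sin_div_cos, hs, zero_div, mul_zero] at hfix
      rw [deriv_ftan lam hc, ← hfix, cos_zero, one_pow, div_one] at hmul
      linarith
    obtain rfl := (mul_tan_eq_self_iff hc hs).1 hfix
    have h2 : ‖2 * z‖ < ‖sin (2 * z)‖ := by
      have hs2 : sin (2 * z) ≠ 0 := by rw [sin_two_mul]; simp [hs, hc]
      rwa [deriv_ftan _ hc, fixedPointParam_div_cos_sq hc hs, norm_div,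
        div_lt_one (norm_pos_iff.2 hs2)] at hmul
    have him : z.im ≠ 0 := fun him =>
      (norm_sin_le_norm_of_im_eq_zero (by simp [him])).not_gt h2
    rcases him.lt_or_gt with him | him
    · refine ⟨-z, ⟨by simpa using him, ?_⟩, fixedPointParam_neg z⟩
      simpa only [mul_neg, sin_neg, norm_neg] using h2
    · exact ⟨z, ⟨him, h2⟩, rfl⟩
  · rintro ⟨z, ⟨-, h2⟩, rfl⟩
    obtain ⟨hs, hc⟩ := sin_ne_zero_and_cos_ne_zero h2
    refine ⟨?_, z, hc, (mul_tan_eq_self_iff hc hs).2 rfl, ?_⟩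
    · rw [fixedPointParam, norm_div, norm_mul, one_lt_div (norm_pos_iff.2 hs)]
      exact norm_sin_lt_norm_mul_norm_cos h2
    · rw [deriv_ftan _ hc, fixedPointParam_div_cos_sq hc hs, norm_div,
        div_lt_one ((norm_nonneg _).trans_lt h2)]
      exact h2

theorem ofReal_mem_image_upperAttractingFixedPoints {x : ℝ} (hx : 1 < x) :
    (x : ℂ) ∈ fixedPointParam '' upperAttractingFixedPoints := by
  obtain ⟨a, hax, ha⟩ : ∃ a, Real.cosh a < x ∧ 0 < a := by
    have hev : ∀ᶠ a in nhdsWithin 0 (Ioi 0), Real.cosh a < x :=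
      ((Real.continuous_cosh.tendsto' 0 1 Real.cosh_zero).eventually (gt_mem_nhds hx)).filter_mono
        nhdsWithin_le_nhds
    exact (hev.and self_mem_nhdsWithin).exists
  let g : ℝ → ℝ := fun y => y * Real.cosh y / Real.sinh y
  have hga : g a < x := by
    have hsinh := Real.self_le_sinh_iff.2 ha.le
    calc g a ≤ Real.cosh a := by
          rw [div_le_iff₀ (Real.sinh_pos_iff.2 ha), mul_comm]
          exact mul_le_mul_of_nonneg_left hsinh (Real.cosh_pos a).le
      _ < x := hax
  have hgx : x < g x := by
    have hsx := Real.sinh_pos_iff.2 (by linarith : (0 : ℝ) < x)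
    rw [lt_div_iff₀ hsx]
    exact mul_lt_mul_of_pos_left (Real.sinh_lt_cosh x) (by linarith)
  have hax' : a < x := by linarith [Real.self_le_sinh_iff.2 ha.le, Real.sinh_lt_cosh a]
  obtain ⟨y, hy, hgy⟩ := intermediate_value_Icc hax'.le
    (fun y hy => by
      have : Real.sinh y ≠ 0 := (Real.sinh_pos_iff.2 (ha.trans_le hy.1)).ne'
      fun_prop (disch := assumption)) ⟨hga.le, hgx.le⟩
  exact ⟨y * I, ofReal_mul_I_mem_upperAttractingFixedPoints (ha.trans_le hy.1),
    by rw [fixedPointParam_ofReal_mul_I]; exact congrArg _ hgy⟩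

/-- The set of parameters `λ` of modulus greater than one for which `f_λ` has an
attracting fixed point is connected and contains every real `λ > 1` (it is the
hyperbolic component `Ω₁`). -/
theorem Omega_one_connected :
    IsConnected {lam : ℂ | 1 < ‖lam‖ ∧
      ∃ z : ℂ, Complex.cos z ≠ 0 ∧ lam * Complex.tan z = z ∧
        ‖deriv (ftan lam) z‖ < 1} ∧
    ∀ x : ℝ, 1 < x → (x : ℂ) ∈ {lam : ℂ | 1 < ‖lam‖ ∧
      ∃ z : ℂ, Complex.cos z ≠ 0 ∧ lam * Complex.tan z = z ∧
        ‖deriv (ftan lam) z‖ < 1} := by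
  rw [setOf_attracting_eq_image_fixedPointParam]
  have hcont : ContinuousOn fixedPointParam upperAttractingFixedPoints :=
    ContinuousOn.div (by fun_prop) (by fun_prop) fun z hz => (sin_ne_zero_and_cos_ne_zero hz.2).1
  exact ⟨isPathConnected_upperAttractingFixedPoints.isConnected.image _ hcont,
    fun x hx => ofReal_mem_image_upperAttractingFixedPoints hx⟩
end
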